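/- Under the same hypotheses (w continuous increasing with exp(−w(‖·‖^θ)) integrable, f bounded continuous with f(x) > 0), for each x: ∫_{ℝ^d} exp(−w(σ‖x−x'‖^θ)) f(x') dx' = Z_d σ^{−d/θ} (f(x) + ε(σ)) where ε(σ) → 0 as σ → ∞. Consequently, −log(∫ exp(−w(σ‖x−x'‖^θ)) f(x') dx') = (d/θ) log σ − log(Z_d) − log f(x) + o(1) as σ → ∞. -/

import Mathlib

/-!
Substituting `x' = x - σ^(-1/θ) τ` turns the smoothed density into
`σ^(-d/θ) ∫ exp(-w(‖τ‖^θ)) f(x - σ^(-1/θ) τ) dτ`. As `σ → ∞` the shifts `σ^(-1/θ) τ` tend to `0`,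
so by dominated convergence (with dominating function `M exp(-w(‖τ‖^θ))`, `M` a bound for `|f|`)
the remaining integral tends to `Z_d f(x)`. Since `Z_d f(x) > 0`, taking logarithms gives the
second expansion.
-/

open MeasureTheory Filter Topology

section SmoothingKernel

variable {E : Type*} [NormedAddCommGroup E] [NormedSpace ℝ E] [MeasurableSpace E]

theorem tendsto_integral_mul_comp_sub_smul [OpensMeasurableSpace E] {μ : Measure E}
    {ι : Type*} {l : Filter ι} [l.IsCountablyGenerated] {K f : E → ℝ} (hK : Integrable K μ)
    (hf : Continuous f) {M : ℝ} (hM : ∀ y, |f y| ≤ M) {c : ι → ℝ} (hc : Tendsto c l (𝓝 0))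
    (x : E) :
    Tendsto (fun i => ∫ τ, K τ * f (x - c i • τ) ∂μ) l (𝓝 ((∫ τ, K τ ∂μ) * f x)) := by
  rw [← integral_mul_const]
  refine tendsto_integral_filter_of_dominated_convergence (fun τ => |K τ| * M)
    (Eventually.of_forall fun i => hK.aestronglyMeasurable.mul ?_)
    (Eventually.of_forall fun i => Eventually.of_forall fun τ => ?_) (hK.abs.mul_const M)
    (Eventually.of_forall fun τ => ?_)
  · exact (hf.comp (continuous_const.sub (continuous_const_smul _))).aestronglyMeasurable
  · rw [Real.norm_eq_abs, abs_mul]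
    exact mul_le_mul_of_nonneg_left (hM _) (abs_nonneg _)
  · have hshift : Tendsto (fun i => x - c i • τ) l (𝓝 x) := by
      simpa using tendsto_const_nhds.sub (hc.smul_const τ)
    exact ((hf.tendsto x).comp hshift).const_mul (K τ)

variable [BorelSpace E] [FiniteDimensional ℝ E] (μ : Measure E) [μ.IsAddHaarMeasure]

theorem integral_comp_smul_sub_mul (K f : E → ℝ) (x : E) {c : ℝ} (hc : 0 < c) :
    ∫ y, K (c • (x - y)) * f y ∂μ =
      (c ^ Module.finrank ℝ E)⁻¹ * ∫ τ, K τ * f (x - c⁻¹ • τ) ∂μ := by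
  calc ∫ y, K (c • (x - y)) * f y ∂μ = ∫ y, K (c • y) * f (x - y) ∂μ := by
        rw [← integral_sub_left_eq_self _ μ x]
        simp only [sub_sub_cancel]
    _ = ∫ y, K (c • y) * f (x - c⁻¹ • c • y) ∂μ := by
        simp only [inv_smul_smul₀ hc.ne']
    _ = _ :=
        Measure.integral_comp_smul_of_nonneg μ (fun τ => K τ * f (x - c⁻¹ • τ)) c (hR := hc.le)

end SmoothingKernel

theorem mul_norm_rpow_eq_norm_smul_rpow {E : Type*} [SeminormedAddCommGroup E]
    [NormedSpace ℝ E] {σ θ : ℝ} (hσ : 0 ≤ σ) (hθ : θ ≠ 0) (v : E) :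
    σ * ‖v‖ ^ θ = ‖σ ^ θ⁻¹ • v‖ ^ θ := by
  rw [norm_smul, Real.norm_eq_abs, abs_of_nonneg (by positivity),
    Real.mul_rpow (by positivity) (norm_nonneg _), Real.rpow_inv_rpow hσ hθ]

theorem exists_tendsto_zero_eq_mul_add {α : Type*} {l : Filter α} {G : α → ℝ} {Z a : ℝ}
    (hZ : Z ≠ 0) (hG : Tendsto G l (𝓝 (Z * a))) :
    ∃ ε : α → ℝ, Tendsto ε l (𝓝 0) ∧ ∀ σ, G σ = Z * (a + ε σ) := by
  refine ⟨fun σ => G σ / Z - a, ?_, fun σ => by field_simp; ring⟩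
  simpa [mul_div_cancel_left₀ a hZ] using (hG.div_const Z).sub_const a

theorem tendsto_neg_log_sub_of_eq_mul_rpow {I ε : ℝ → ℝ} {Z a r : ℝ} (hZ : 0 < Z) (ha : 0 < a)
    (hε : Tendsto ε atTop (𝓝 0)) (hI : ∀ σ > 0, I σ = Z * σ ^ (-r) * (a + ε σ)) :
    Tendsto (fun σ => -Real.log (I σ) - (r * Real.log σ - Real.log Z - Real.log a))
      atTop (𝓝 0) := by
  have haε : Tendsto (fun σ => a + ε σ) atTop (𝓝 a) := by
    simpa using tendsto_const_nhds.add hε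
  have hlog : Tendsto (fun σ => Real.log a - Real.log (a + ε σ)) atTop (𝓝 0) := by
    simpa using (tendsto_const_nhds (x := Real.log a)).sub
      ((Real.continuousAt_log ha.ne').tendsto.comp haε)
  have hpos : ∀ᶠ σ in atTop, 0 < a + ε σ := haε.eventually (eventually_gt_nhds ha)
  refine hlog.congr' ?_
  filter_upwards [eventually_gt_atTop 0, hpos] with σ hσ hσpos
  rw [hI σ hσ, Real.log_mul (by positivity) hσpos.ne', Real.log_mul hZ.ne' (by positivity),
    Real.log_rpow hσ]
  ring

theorem smoothed_density_asymptotics_general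
    (d : ℕ) (θ : ℝ) (hθ : 0 < θ)
    (w : ℝ → ℝ)
    (hint : Integrable (fun τ : EuclideanSpace ℝ (Fin d) => Real.exp (-(w (‖τ‖ ^ θ)))))
    (f : EuclideanSpace ℝ (Fin d) → ℝ) (hfc : Continuous f)
    (hfb : ∃ M, ∀ x, |f x| ≤ M)
    (x : EuclideanSpace ℝ (Fin d)) (hfx : 0 < f x) :
    (∃ ε : ℝ → ℝ, Tendsto ε atTop (nhds 0) ∧
      ∀ σ > (0:ℝ),
        (∫ x' : EuclideanSpace ℝ (Fin d), Real.exp (-(w (σ * ‖x - x'‖ ^ θ))) * f x') =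
          (∫ τ : EuclideanSpace ℝ (Fin d), Real.exp (-(w (‖τ‖ ^ θ)))) *
            σ ^ (-(d:ℝ)/θ) * (f x + ε σ)) ∧
    Tendsto (fun σ : ℝ =>
        (-(Real.log (∫ x' : EuclideanSpace ℝ (Fin d),
            Real.exp (-(w (σ * ‖x - x'‖ ^ θ))) * f x'))) -
          ((d/θ) * Real.log σ
            - Real.log (∫ τ : EuclideanSpace ℝ (Fin d), Real.exp (-(w (‖τ‖ ^ θ))))
            - Real.log (f x)))
      atTop (nhds 0) := by
  obtain ⟨M, hM⟩ := hfb
  set K := fun τ : EuclideanSpace ℝ (Fin d) => Real.exp (-(w (‖τ‖ ^ θ)))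
  have hZ : 0 < ∫ τ, K τ := integral_exp_pos hint
  have hscale : ∀ σ > (0 : ℝ), ∫ x', Real.exp (-(w (σ * ‖x - x'‖ ^ θ))) * f x' =
      σ ^ (-((d : ℝ) / θ)) * ∫ τ, K τ * f (x - (σ ^ θ⁻¹)⁻¹ • τ) := by
    intro σ hσ
    simp_rw [mul_norm_rpow_eq_norm_smul_rpow hσ.le hθ.ne']
    rw [integral_comp_smul_sub_mul volume K f x (by positivity), finrank_euclideanSpace_fin,
      ← Real.rpow_natCast, ← Real.rpow_mul hσ.le, ← Real.rpow_neg hσ.le, inv_mul_eq_div]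
  have hshift : Tendsto (fun σ : ℝ => (σ ^ θ⁻¹)⁻¹) atTop (𝓝 0) :=
    tendsto_inv_atTop_zero.comp (tendsto_rpow_atTop (inv_pos.2 hθ))
  obtain ⟨ε, hε, hGε⟩ := exists_tendsto_zero_eq_mul_add hZ.ne'
    (tendsto_integral_mul_comp_sub_smul hint hfc hM hshift x)
  have hexp : ∀ σ > (0 : ℝ), ∫ x', Real.exp (-(w (σ * ‖x - x'‖ ^ θ))) * f x' =
      (∫ τ, K τ) * σ ^ (-((d : ℝ) / θ)) * (f x + ε σ) := fun σ hσ => by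
    rw [hscale σ hσ, hGε]; ring
  simp only [neg_div]
  exact ⟨⟨ε, hε, hexp⟩, tendsto_neg_log_sub_of_eq_mul_rpow hZ hfx hε hexp⟩

/-- Asymptotics of the smoothed density: with `Z_d = ∫ exp(-w(‖τ‖^θ)) dτ`,
`∫ exp(-w(σ‖x-x'‖^θ)) f(x') dx' = Z_d σ^{-d/θ} (f(x) + ε(σ))` with `ε(σ) → 0`,
and consequently
`-log ∫ exp(-w(σ‖x-x'‖^θ)) f(x') dx' = (d/θ) log σ - log Z_d - log f(x) + o(1)`. -/
theorem smoothed_density_asymptotics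
    (d : ℕ) (hd : 1 ≤ d) (θ : ℝ) (hθ : 0 < θ)
    (w : ℝ → ℝ) (hwc : Continuous w)
    (hwnn : ∀ t ≥ (0:ℝ), 0 ≤ w t)
    (hmono : MonotoneOn w (Set.Ici (0:ℝ)))
    (hlim : Tendsto w atTop atTop)
    (hint : Integrable (fun τ : EuclideanSpace ℝ (Fin d) => Real.exp (-(w (‖τ‖ ^ θ)))))
    (f : EuclideanSpace ℝ (Fin d) → ℝ) (hfc : Continuous f)
    (hfb : ∃ M, ∀ x, |f x| ≤ M)
    (x : EuclideanSpace ℝ (Fin d)) (hfx : 0 < f x) :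
    (∃ ε : ℝ → ℝ, Tendsto ε atTop (nhds 0) ∧
      ∀ σ > (0:ℝ),
        (∫ x' : EuclideanSpace ℝ (Fin d), Real.exp (-(w (σ * ‖x - x'‖ ^ θ))) * f x') =
          (∫ τ : EuclideanSpace ℝ (Fin d), Real.exp (-(w (‖τ‖ ^ θ)))) *
            σ ^ (-(d:ℝ)/θ) * (f x + ε σ)) ∧
    Tendsto (fun σ : ℝ =>
        (-(Real.log (∫ x' : EuclideanSpace ℝ (Fin d),
            Real.exp (-(w (σ * ‖x - x'‖ ^ θ))) * f x'))) -
          ((d/θ) * Real.log σ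
            - Real.log (∫ τ : EuclideanSpace ℝ (Fin d), Real.exp (-(w (‖τ‖ ^ θ))))
            - Real.log (f x)))
      atTop (nhds 0) :=
  smoothed_density_asymptotics_general d θ hθ w hint f hfc hfb x hfx
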